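/- arXiv:2303.10807 — 2 statements merged into one kernel-verified Lean document; each statement's English description precedes it below -/
import Mathlib

section
/- Let d ≥ 1, δ > 0, let μ be a finite nonnegative Borel measure on [0,δ], let K ≥ 0 and let b : ℝ^d × ℝ^d → ℝ^d satisfy ‖b(x,y) − b(x̃,ỹ)‖ ≤ K(‖x−x̃‖ + ‖y−ỹ‖) for all x, x̃, y, ỹ ∈ ℝ^d. Let φ : [−δ,0] → ℝ^d be continuous and let x, x̃ : [−δ,1] → ℝ^d be two continuous functions with x(t) = x̃(t) = φ(t) for t ∈ [−δ,0] and x(t) = φ(0) + ∫₀^t b(x(s), ∫₀^δ x(s−u) μ(du)) ds, x̃(t) = φ(0) + ∫₀^t b(x̃(s), ∫₀^δ x̃(s−u) μ(du)) ds for all t ∈ [0,1]. Then x(t) = x̃(t) for all t ∈ [−δ,1]. -/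
open MeasureTheory Set Filter Topology

/-!
Grönwall's argument in its Picard-iteration form. The difference `g = ‖x - x'‖` of two solutions
vanishes on `[-δ, 0]` and is bounded by some `B` on `[0, T]`. Whenever `g ≤ c` on `[0, T]` for a
nonnegative nondecreasing `c`, the delay term only looks back in time, so the Lipschitz bound on the
drift gives `g t ≤ C ∫₀ᵗ c` with `C = K (1 + μ[0, δ])`. Iterating from `c = B` yields
`g t ≤ B (C t)ⁿ / n!` for every `n`, hence `g = 0`.
-/

theorem mul_integral_mul_pow_div_factorial (C t : ℝ) (n : ℕ) :
    C * ∫ s in (0 : ℝ)..t, (C * s) ^ n / n.factorial = (C * t) ^ (n + 1) / (n + 1).factorial := by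
  simp only [mul_pow, div_eq_mul_inv, intervalIntegral.integral_mul_const,
    intervalIntegral.integral_const_mul, integral_pow, Nat.factorial_succ]
  push_cast
  field_simp
  ring

theorem nonpos_of_le_mul_integral {g : ℝ → ℝ} {T B C : ℝ} (hC : 0 ≤ C)
    (hB : ∀ t ∈ Icc 0 T, g t ≤ B)
    (step : ∀ c : ℝ → ℝ, Continuous c → 0 ≤ c 0 → MonotoneOn c (Ici 0) →
      (∀ s ∈ Icc 0 T, g s ≤ c s) → ∀ t ∈ Icc 0 T, g t ≤ C * ∫ s in (0 : ℝ)..t, c s) :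
    ∀ t ∈ Icc 0 T, g t ≤ 0 := by
  set B' := max B 0
  have iterate : ∀ n : ℕ, ∀ t ∈ Icc 0 T, g t ≤ B' * ((C * t) ^ n / n.factorial) := by
    intro n
    induction n with
    | zero =>
      intro t ht
      simpa only [pow_zero, Nat.factorial_zero, Nat.cast_one, div_one, mul_one] using
        (hB t ht).trans (le_max_left B 0)
    | succ n ih =>
      intro t ht
      have hmono : MonotoneOn (fun s => B' * ((C * s) ^ n / n.factorial)) (Ici 0) :=
        fun s hs s' _ hss' => by
          dsimp only
          gcongr
          exact mul_nonneg hC hs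
      calc g t ≤ C * ∫ s in (0 : ℝ)..t, B' * ((C * s) ^ n / n.factorial) :=
            step _ (by fun_prop) (by positivity) hmono ih t ht
        _ = B' * ((C * t) ^ (n + 1) / (n + 1).factorial) := by
          rw [intervalIntegral.integral_const_mul, mul_left_comm,
            mul_integral_mul_pow_div_factorial]
  intro t ht
  have hlim : Tendsto (fun n : ℕ => B' * ((C * t) ^ n / n.factorial)) atTop (𝓝 0) := by
    simpa using (FloorSemiring.tendsto_pow_div_factorial_atTop (C * t)).const_mul B'
  exact ge_of_tendsto' hlim fun n => iterate n t ht

theorem continuous_uncurry_of_norm_sub_le {E F G : Type*} [SeminormedAddCommGroup E]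
    [SeminormedAddCommGroup F] [SeminormedAddCommGroup G] {b : E → F → G} {K : ℝ} (hK : 0 ≤ K)
    (hb : ∀ (x x' : E) (y y' : F), ‖b x y - b x' y'‖ ≤ K * (‖x - x'‖ + ‖y - y'‖)) :
    Continuous (Function.uncurry b) := by
  refine (LipschitzWith.of_dist_le' (K := 2 * K) fun p q => ?_).continuous
  calc dist (b p.1 p.2) (b q.1 q.2) ≤ K * (dist p.1 q.1 + dist p.2 q.2) := by
        simpa only [dist_eq_norm] using hb _ _ _ _
    _ ≤ K * (dist p q + dist p q) := by
        rw [Prod.dist_eq]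
        gcongr
        exacts [le_max_left _ _, le_max_right _ _]
    _ = 2 * K * dist p q := by ring

variable {E : Type*} [NormedAddCommGroup E] [NormedSpace ℝ E]

noncomputable def delayIntegral (μ : Measure ℝ) (δ : ℝ) (y : ℝ → E) (s : ℝ) : E :=
  ∫ u in Icc 0 δ, y (s - u) ∂μ

section DelayIntegral

variable {μ : Measure ℝ} {δ : ℝ}

theorem delayIntegral_congr {x y : ℝ → E} {s : ℝ} (h : EqOn x y (Icc (s - δ) s)) :
    delayIntegral μ δ x s = delayIntegral μ δ y s :=
  setIntegral_congr_fun measurableSet_Icc fun u hu => h ⟨by linarith [hu.2], by linarith [hu.1]⟩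

theorem Continuous.delayIntegral [IsLocallyFiniteMeasure μ] {y : ℝ → E} (hy : Continuous y) :
    Continuous (delayIntegral μ δ y) :=
  continuous_parametric_integral_of_continuous (f := fun s u => y (s - u)) (by fun_prop)
    isCompact_Icc

theorem norm_delayIntegral_sub_le [IsFiniteMeasure μ] {y y' : ℝ → E} (hy : Continuous y)
    (hy' : Continuous y') {s c : ℝ} (h : ∀ u ∈ Icc 0 δ, ‖y (s - u) - y' (s - u)‖ ≤ c) :
    ‖delayIntegral μ δ y s - delayIntegral μ δ y' s‖ ≤ c * μ.real (Icc 0 δ) := by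
  have hyu : Continuous fun u => y (s - u) := by fun_prop
  have hy'u : Continuous fun u => y' (s - u) := by fun_prop
  rw [delayIntegral, delayIntegral, ← integral_sub hyu.integrableOn_Icc hy'u.integrableOn_Icc]
  exact norm_setIntegral_le_of_norm_le_const (measure_lt_top μ _) h

end DelayIntegral

def SolvesDelayODEOn (μ : Measure ℝ) (δ : ℝ) (b : E → E → E) (a : E) (T : ℝ) (x : ℝ → E) : Prop :=
  ∀ t ∈ Icc 0 T, x t = a + ∫ s in (0 : ℝ)..t, b (x s) (delayIntegral μ δ x s)

section DelayODE

variable {μ : Measure ℝ} {δ K T : ℝ} {b : E → E → E}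

theorem SolvesDelayODEOn.congr (hδ : 0 ≤ δ) {a : E} {x y : ℝ → E}
    (hx : SolvesDelayODEOn μ δ b a T x) (hxy : EqOn x y (Icc (-δ) T)) :
    SolvesDelayODEOn μ δ b a T y := by
  intro t ht
  rw [← hxy ⟨by linarith [ht.1], ht.2⟩, hx t ht]
  congr 1
  refine intervalIntegral.integral_congr fun s hs => ?_
  rw [uIcc_of_le ht.1] at hs
  have hsub : Icc (s - δ) s ⊆ Icc (-δ) T := Icc_subset_Icc (by linarith [hs.1]) (hs.2.trans ht.2)
  rw [hxy (hsub ⟨by linarith, le_rfl⟩), delayIntegral_congr (hxy.mono hsub)]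

variable [IsFiniteMeasure μ]

theorem SolvesDelayODEOn.sub_eq_integral (hK : 0 ≤ K)
    (hb : ∀ x x' y y' : E, ‖b x y - b x' y'‖ ≤ K * (‖x - x'‖ + ‖y - y'‖))
    {a : E} {y y' : ℝ → E} (hy : Continuous y) (hy' : Continuous y')
    (hyeq : SolvesDelayODEOn μ δ b a T y) (hy'eq : SolvesDelayODEOn μ δ b a T y')
    {t : ℝ} (ht : t ∈ Icc 0 T) :
    y t - y' t = ∫ s in (0 : ℝ)..t,
      (b (y s) (delayIntegral μ δ y s) - b (y' s) (delayIntegral μ δ y' s)) := by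
  have hbc := continuous_uncurry_of_norm_sub_le hK hb
  have hF : Continuous fun s => b (y s) (delayIntegral μ δ y s) :=
    hbc.comp (hy.prodMk hy.delayIntegral)
  have hF' : Continuous fun s => b (y' s) (delayIntegral μ δ y' s) :=
    hbc.comp (hy'.prodMk hy'.delayIntegral)
  rw [hyeq t ht, hy'eq t ht, add_sub_add_left_eq_sub,
    intervalIntegral.integral_sub (hF.intervalIntegrable _ _) (hF'.intervalIntegrable _ _)]

theorem SolvesDelayODEOn.eqOn_of_continuous (hK : 0 ≤ K)
    (hb : ∀ x x' y y' : E, ‖b x y - b x' y'‖ ≤ K * (‖x - x'‖ + ‖y - y'‖))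
    {a : E} {y y' : ℝ → E} (hy : Continuous y) (hy' : Continuous y')
    (hyeq : SolvesDelayODEOn μ δ b a T y) (hy'eq : SolvesDelayODEOn μ δ b a T y')
    (hpast : ∀ t ≤ 0, y t = y' t) : EqOn y y' (Icc 0 T) := by
  obtain ⟨B, hB⟩ := isCompact_Icc.exists_bound_of_continuousOn (hy.sub hy').continuousOn
  have hC : 0 ≤ K * (1 + μ.real (Icc 0 δ)) := by positivity
  suffices h : ∀ t ∈ Icc 0 T, ‖y t - y' t‖ ≤ 0 from
    fun t ht => sub_eq_zero.mp (norm_le_zero_iff.mp (h t ht))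
  refine nonpos_of_le_mul_integral hC hB fun c hc hc0 hmono hgc t ht => ?_
  have hdrift : ∀ s ∈ Ioc 0 t, ‖b (y s) (delayIntegral μ δ y s) -
      b (y' s) (delayIntegral μ δ y' s)‖ ≤ K * (1 + μ.real (Icc 0 δ)) * c s := by
    intro s hs
    have hsT : s ∈ Icc 0 T := ⟨hs.1.le, hs.2.trans ht.2⟩
    have hlag : ∀ u ∈ Icc 0 δ, ‖y (s - u) - y' (s - u)‖ ≤ c s := by
      intro u hu
      rcases le_or_gt (s - u) 0 with hsu | hsu
      · rw [hpast _ hsu, sub_self, norm_zero]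
        exact hc0.trans (hmono self_mem_Ici hsT.1 hsT.1)
      · exact (hgc _ ⟨hsu.le, by linarith [hu.1, hsT.2]⟩).trans
          (hmono hsu.le hsT.1 (by linarith [hu.1]))
    calc _ ≤ K * (‖y s - y' s‖ + ‖delayIntegral μ δ y s - delayIntegral μ δ y' s‖) := hb _ _ _ _
      _ ≤ K * (c s + c s * μ.real (Icc 0 δ)) := by
        gcongr
        exacts [hgc s hsT, norm_delayIntegral_sub_le hy hy' hlag]
      _ = K * (1 + μ.real (Icc 0 δ)) * c s := by ring
  rw [hyeq.sub_eq_integral hK hb hy hy' hy'eq ht, ← intervalIntegral.integral_const_mul]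
  exact intervalIntegral.norm_integral_le_of_norm_le ht.1 (ae_of_all _ hdrift)
    ((hc.const_mul _).intervalIntegrable _ _)

theorem SolvesDelayODEOn.eqOn (hK : 0 ≤ K)
    (hb : ∀ x x' y y' : E, ‖b x y - b x' y'‖ ≤ K * (‖x - x'‖ + ‖y - y'‖)) (hδ : 0 ≤ δ)
    {a : E} {x x' : ℝ → E} (hx : ContinuousOn x (Icc (-δ) T)) (hx' : ContinuousOn x' (Icc (-δ) T))
    (hxeq : SolvesDelayODEOn μ δ b a T x) (hx'eq : SolvesDelayODEOn μ δ b a T x')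
    (hpast : EqOn x x' (Icc (-δ) 0)) : EqOn x x' (Icc (-δ) T) := by
  intro t ht
  rcases le_or_gt t 0 with ht0 | ht0
  · exact hpast ⟨ht.1, ht0⟩
  have hδT : -δ ≤ T := ht.1.trans ht.2
  set p : ℝ → ℝ := fun s => projIcc (-δ) T hδT s
  have hp : Continuous p := continuous_subtype_val.comp continuous_projIcc
  have hpIcc : ∀ s, p s ∈ Icc (-δ) T := fun s => (projIcc (-δ) T hδT s).2
  have hpid : EqOn p id (Icc (-δ) T) := fun s hs => congrArg Subtype.val (projIcc_of_mem hδT hs)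
  have hppast : ∀ s ≤ 0, p s ∈ Icc (-δ) 0 := fun s hs =>
    ⟨(hpIcc s).1, max_le (by linarith) (min_le_of_right_le hs)⟩
  have hyx : EqOn (x ∘ p) x (Icc (-δ) T) := fun s hs => congrArg x (hpid hs)
  have hy'x : EqOn (x' ∘ p) x' (Icc (-δ) T) := fun s hs => congrArg x' (hpid hs)
  rw [← hyx ht, ← hy'x ht]
  exact SolvesDelayODEOn.eqOn_of_continuous hK hb (hx.comp_continuous hp hpIcc)
    (hx'.comp_continuous hp hpIcc) (hxeq.congr hδ hyx.symm) (hx'eq.congr hδ hy'x.symm)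
    (fun s hs => hpast (hppast s hs)) ⟨ht0.le, ht.2⟩

end DelayODE

theorem delay_ode_unique_general
    (d : ℕ) (δ : ℝ) (hδ : 0 < δ)
    (μ : Measure ℝ) [IsFiniteMeasure μ]
    (K : ℝ) (hK : 0 ≤ K)
    (b : EuclideanSpace ℝ (Fin d) → EuclideanSpace ℝ (Fin d) → EuclideanSpace ℝ (Fin d))
    (hb : ∀ x x' y y' : EuclideanSpace ℝ (Fin d),
      ‖b x y - b x' y'‖ ≤ K * (‖x - x'‖ + ‖y - y'‖))
    (φ : ℝ → EuclideanSpace ℝ (Fin d))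
    (x x' : ℝ → EuclideanSpace ℝ (Fin d))
    (hxc : ContinuousOn x (Icc (-δ) 1)) (hx'c : ContinuousOn x' (Icc (-δ) 1))
    (hxinit : ∀ t ∈ Icc (-δ) (0:ℝ), x t = φ t)
    (hx'init : ∀ t ∈ Icc (-δ) (0:ℝ), x' t = φ t)
    (hxeq : ∀ t ∈ Icc (0:ℝ) 1,
      x t = φ 0 + ∫ s in (0:ℝ)..t, b (x s) (∫ u in Icc (0:ℝ) δ, x (s - u) ∂μ))
    (hx'eq : ∀ t ∈ Icc (0:ℝ) 1,
      x' t = φ 0 + ∫ s in (0:ℝ)..t, b (x' s) (∫ u in Icc (0:ℝ) δ, x' (s - u) ∂μ)) :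
    ∀ t ∈ Icc (-δ) (1:ℝ), x t = x' t :=
  SolvesDelayODEOn.eqOn hK hb hδ.le hxc hx'c hxeq hx'eq
    fun t ht => (hxinit t ht).trans (hx'init t ht).symm

/-- Uniqueness of solutions of the delay ordinary differential equation
`x(t) = φ(0) + ∫₀ᵗ b(x(s), ∫₀^δ x(s-u) μ(du)) ds` with initial path `φ` on `[-δ,0]`,
for a Lipschitz drift `b` and a finite delay measure `μ` on `[0,δ]`. -/
theorem delay_ode_unique
    (d : ℕ) (hd : 1 ≤ d) (δ : ℝ) (hδ : 0 < δ)
    (μ : Measure ℝ) [IsFiniteMeasure μ]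
    (K : ℝ) (hK : 0 ≤ K)
    (b : EuclideanSpace ℝ (Fin d) → EuclideanSpace ℝ (Fin d) → EuclideanSpace ℝ (Fin d))
    (hb : ∀ x x' y y' : EuclideanSpace ℝ (Fin d),
      ‖b x y - b x' y'‖ ≤ K * (‖x - x'‖ + ‖y - y'‖))
    (φ : ℝ → EuclideanSpace ℝ (Fin d)) (hφ : ContinuousOn φ (Icc (-δ) 0))
    (x x' : ℝ → EuclideanSpace ℝ (Fin d))
    (hxc : ContinuousOn x (Icc (-δ) 1)) (hx'c : ContinuousOn x' (Icc (-δ) 1))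
    (hxinit : ∀ t ∈ Icc (-δ) (0:ℝ), x t = φ t)
    (hx'init : ∀ t ∈ Icc (-δ) (0:ℝ), x' t = φ t)
    (hxeq : ∀ t ∈ Icc (0:ℝ) 1,
      x t = φ 0 + ∫ s in (0:ℝ)..t, b (x s) (∫ u in Icc (0:ℝ) δ, x (s - u) ∂μ))
    (hx'eq : ∀ t ∈ Icc (0:ℝ) 1,
      x' t = φ 0 + ∫ s in (0:ℝ)..t, b (x' s) (∫ u in Icc (0:ℝ) δ, x' (s - u) ∂μ)) :
    ∀ t ∈ Icc (-δ) (1:ℝ), x t = x' t :=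
  delay_ode_unique_general d δ hδ μ K hK b hb φ x x' hxc hx'c hxinit hx'init hxeq hx'eq
end

section
/- Let p ≥ 1 be a real number, L ≥ 0, let d ≥ 1, δ > 0, μ a finite nonnegative Borel measure on [0,δ], and let x⁰ : [−δ,1] → ℝ^d be L-Lipschitz. Let (Ω, 𝓕, P) be a probability space and Z : Ω → C([−δ,1]; ℝ^d) be measurable (with the sup-norm Borel σ-algebra) such that E[ sup_{s∈[−δ,1]} ‖Z(s) − x⁰(s)‖^p ] ≤ A for some A ≥ 0. Then for every integer n ≥ 1, E[ sup_{t∈[0,1]} ‖∫₀^δ Z(⌊nt⌋/n − g_n(u)) μ(du) − ∫₀^δ x⁰(t−u) μ(du)‖^p ] ≤ 2^{p−1} μ([0,δ])^p (A + (2L/n)^p). -/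
open MeasureTheory Set
open scoped ENNReal NNReal

/-! For every sample path and every `t`, the discretized argument `⌊nt⌋/n - g_n(u)` stays in
`[-δ, 1]` and within `2/n` of `t - u`, so the two integrands differ by at most
`sup ‖Z - x⁰‖ + 2L/n`. Integrating against `μ`, raising to the power `p` with
`(a + b)^p ≤ 2^(p-1) (a^p + b^p)` and taking expectations gives the estimate. -/

theorem Real.rpow_add_le_mul_rpow_add_rpow {a b p : ℝ} (ha : 0 ≤ a) (hb : 0 ≤ b)
    (hp : 1 ≤ p) : (a + b) ^ p ≤ 2 ^ (p - 1) * (a ^ p + b ^ p) := by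
  have h := NNReal.coe_le_coe.2 (NNReal.rpow_add_le_mul_rpow_add_rpow ⟨a, ha⟩ ⟨b, hb⟩ hp)
  push_cast [NNReal.coe_rpow] at h
  exact h

section Composition

variable {α β E : Type*} [MeasurableSpace α] [TopologicalSpace β] [MeasurableSpace β]
  [OpensMeasurableSpace β] {μ : Measure α} {f : β → E} {φ : α → β} {I : Set β}

theorem ContinuousOn.aestronglyMeasurable_comp [TopologicalSpace E]
    [TopologicalSpace.PseudoMetrizableSpace E] [SecondCountableTopologyEither β E]
    (hf : ContinuousOn f I) (hI : MeasurableSet I) (hφ : Measurable φ)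
    (hφI : ∀ᵐ a ∂μ, φ a ∈ I) : AEStronglyMeasurable (f ∘ φ) μ := by
  refine AEStronglyMeasurable.comp_measurable ?_ hφ
  -- the image measure lives on `I`, where `f` is continuous
  rw [← Measure.restrict_eq_self_of_ae_mem ((ae_map_iff hφ.aemeasurable hI).2 hφI)]
  exact hf.aestronglyMeasurable hI

theorem ContinuousOn.integrableOn_comp [T2Space β] [NormedAddCommGroup E]
    [SecondCountableTopologyEither β E] [IsFiniteMeasure μ] {s : Set α} (hf : ContinuousOn f I)
    (hI : IsCompact I) (hφ : Measurable φ) (hs : MeasurableSet s) (hφs : MapsTo φ s I) :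
    IntegrableOn (fun a => f (φ a)) s μ := by
  obtain ⟨C, hC⟩ := hI.exists_bound_of_continuousOn hf
  exact Integrable.of_bound (hf.aestronglyMeasurable_comp hI.isClosed.measurableSet hφ
    (ae_restrict_of_forall_mem hs hφs)) C (ae_restrict_of_forall_mem hs fun a ha => hC _ (hφs ha))

end Composition

theorem norm_setIntegral_comp_sub_setIntegral_comp_le {α E : Type*} [MeasurableSpace α]
    [NormedAddCommGroup E] [NormedSpace ℝ E] {μ : Measure α}
    [IsFiniteMeasure μ] {z x : ℝ → E} {φ ψ : α → ℝ} {I : Set ℝ} {s : Set α} {K : ℝ≥0} {M η : ℝ}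
    (hI : IsCompact I) (hs : MeasurableSet s) (hz : ContinuousOn z I)
    (hx : LipschitzOnWith K x I) (hzx : ∀ r ∈ I, ‖z r - x r‖ ≤ M)
    (hφ : Measurable φ) (hψ : Measurable ψ) (hφs : MapsTo φ s I) (hψs : MapsTo ψ s I)
    (hφψ : ∀ u ∈ s, |φ u - ψ u| ≤ η) :
    ‖∫ u in s, z (φ u) ∂μ - ∫ u in s, x (ψ u) ∂μ‖ ≤ (M + K * η) * μ.real s := by
  rw [← integral_sub (hz.integrableOn_comp hI hφ hs hφs)
    (hx.continuousOn.integrableOn_comp hI hψ hs hψs)]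
  refine norm_setIntegral_le_of_norm_le_const (measure_lt_top _ _) fun u hu => ?_
  calc ‖z (φ u) - x (ψ u)‖ ≤ ‖z (φ u) - x (φ u)‖ + ‖x (φ u) - x (ψ u)‖ :=
        norm_sub_le_norm_sub_add_norm_sub _ _ _
    _ ≤ M + K * η := by
      gcongr
      · exact hzx _ (hφs hu)
      · exact (hx.norm_sub_le (hφs hu) (hψs hu)).trans
          (mul_le_mul_of_nonneg_left (hφψ u hu) K.coe_nonneg)

section Grid

variable {r x δ u : ℝ}

theorem Nat.floor_mul_div_le_self (hr : 0 < r) (hx : 0 ≤ x) :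
    (⌊r * x⌋₊ : ℝ) / r ≤ x := by
  rw [div_le_iff₀ hr, mul_comm x]
  exact Nat.floor_le (by positivity)

theorem Nat.sub_inv_le_floor_mul_div (hr : 0 < r) (x : ℝ) :
    x - r⁻¹ ≤ (⌊r * x⌋₊ : ℝ) / r := by
  rw [le_div_iff₀ hr, sub_mul, inv_mul_cancel₀ hr.ne', mul_comm x]
  linarith [Nat.lt_floor_add_one (r * x)]

noncomputable def gridMap (r δ u : ℝ) : ℝ :=
  min ((⌊r * u⌋₊ : ℝ) / r) ((⌊r * δ⌋₊ : ℝ) / r)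

theorem gridMap_nonneg (hr : 0 ≤ r) : 0 ≤ gridMap r δ u := by
  unfold gridMap; positivity

theorem gridMap_le_self (hr : 0 < r) (hu : 0 ≤ u) : gridMap r δ u ≤ u :=
  (min_le_left _ _).trans (Nat.floor_mul_div_le_self hr hu)

theorem sub_inv_le_gridMap (hr : 0 < r) (hu : u ≤ δ) : u - r⁻¹ ≤ gridMap r δ u :=
  le_min (Nat.sub_inv_le_floor_mul_div hr u)
    ((sub_le_sub_right hu _).trans (Nat.sub_inv_le_floor_mul_div hr δ))

theorem measurable_gridMap : Measurable (gridMap r δ) :=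
  ((measurable_from_nat.comp (measurable_const_mul r).nat_floor).div_const _).min measurable_const

end Grid

section DelayFunctional

variable {E : Type*} [NormedAddCommGroup E] [NormedSpace ℝ E]
  {μ : Measure ℝ} [IsFiniteMeasure μ] {z x : ℝ → E} {K : ℝ≥0} {r δ t : ℝ}

theorem norm_discreteDelay_sub_delay_le {M : ℝ} (hz : ContinuousOn z (Icc (-δ) 1))
    (hx : LipschitzOnWith K x (Icc (-δ) 1)) (hzx : ∀ s ∈ Icc (-δ) 1, ‖z s - x s‖ ≤ M)
    (hr : 0 < r) (ht : t ∈ Icc 0 1) :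
    ‖∫ u in Icc 0 δ, z ((⌊r * t⌋₊ : ℝ) / r - gridMap r δ u) ∂μ
        - ∫ u in Icc 0 δ, x (t - u) ∂μ‖ ≤ (M + 2 * K / r) * μ.real (Icc 0 δ) := by
  obtain ⟨ht0, ht1⟩ := ht
  have hb0 : 0 ≤ (⌊r * t⌋₊ : ℝ) / r := by positivity
  have hbt := Nat.floor_mul_div_le_self hr ht0
  have htb := Nat.sub_inv_le_floor_mul_div hr t
  have hr' := inv_pos.2 hr
  rw [show 2 * (K : ℝ) / r = K * (2 * r⁻¹) by ring]
  refine norm_setIntegral_comp_sub_setIntegral_comp_le isCompact_Icc measurableSet_Icc hz hx hzx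
    (measurable_const.sub measurable_gridMap) (measurable_const.sub measurable_id)
    (fun u ⟨hu0, huδ⟩ => ?_) (fun u ⟨hu0, huδ⟩ => ?_) (fun u ⟨hu0, huδ⟩ => ?_)
  · have := gridMap_nonneg (δ := δ) (u := u) hr.le
    have := gridMap_le_self (δ := δ) hr hu0
    constructor <;> linarith
  · constructor <;> linarith
  · have := gridMap_le_self (δ := δ) hr hu0
    have := sub_inv_le_gridMap hr huδ
    rw [abs_le]
    constructor <;> linarith

theorem sSup_norm_discreteDelay_sub_delay_rpow_le {p : ℝ} (hp : 1 ≤ p)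
    (hz : ContinuousOn z (Icc (-δ) 1)) (hx : LipschitzOnWith K x (Icc (-δ) 1)) (hr : 0 < r) :
    sSup ((fun t => ‖∫ u in Icc 0 δ, z ((⌊r * t⌋₊ : ℝ) / r - gridMap r δ u) ∂μ
        - ∫ u in Icc 0 δ, x (t - u) ∂μ‖ ^ p) '' Icc 0 1)
      ≤ 2 ^ (p - 1) * μ.real (Icc 0 δ) ^ p
        * (sSup ((fun s => ‖z s - x s‖ ^ p) '' Icc (-δ) 1) + (2 * K / r) ^ p) := by
  have hp0 : 0 < p := zero_lt_one.trans_le hp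
  set S := sSup ((fun s => ‖z s - x s‖ ^ p) '' Icc (-δ) 1)
  have hS0 : 0 ≤ S := Real.sSup_nonneg (by rintro _ ⟨s, -, rfl⟩; positivity)
  have hbdd : BddAbove ((fun s => ‖z s - x s‖ ^ p) '' Icc (-δ) 1) :=
    (isCompact_Icc.image_of_continuousOn
      ((hz.sub hx.continuousOn).norm.rpow_const fun _ _ => Or.inr hp0.le)).bddAbove
  have hzx : ∀ s ∈ Icc (-δ) 1, ‖z s - x s‖ ≤ S ^ p⁻¹ := fun s hs =>
    (Real.le_rpow_inv_iff_of_pos (norm_nonneg _) hS0 hp0).2 (le_csSup hbdd ⟨s, hs, rfl⟩)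
  refine Real.sSup_le ?_ (by positivity)
  rintro _ ⟨t, ht, rfl⟩
  calc _ ≤ ((S ^ p⁻¹ + 2 * K / r) * μ.real (Icc 0 δ)) ^ p :=
        Real.rpow_le_rpow (norm_nonneg _) (norm_discreteDelay_sub_delay_le hz hx hzx hr ht) hp0.le
    _ = (S ^ p⁻¹ + 2 * K / r) ^ p * μ.real (Icc 0 δ) ^ p :=
        Real.mul_rpow (by positivity) (by positivity)
    _ ≤ 2 ^ (p - 1) * ((S ^ p⁻¹) ^ p + (2 * K / r) ^ p) * μ.real (Icc 0 δ) ^ p := by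
        gcongr
        exact Real.rpow_add_le_mul_rpow_add_rpow (by positivity) (by positivity) hp
    _ = _ := by rw [Real.rpow_inv_rpow hS0 hp0.ne']; ring

end DelayFunctional

theorem lintegral_ofReal_mul_add_le {Ω : Type*} [MeasurableSpace Ω] {P : Measure Ω}
    [IsProbabilityMeasure P] {X : Ω → ℝ} {A C c : ℝ} (hC : 0 ≤ C) (hc : 0 ≤ c)
    (hX : ∫⁻ ω, ENNReal.ofReal (X ω) ∂P ≤ ENNReal.ofReal A) (hA : 0 ≤ A) :
    ∫⁻ ω, ENNReal.ofReal (C * (X ω + c)) ∂P ≤ ENNReal.ofReal (C * (A + c)) := calc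
  _ ≤ ∫⁻ ω, ENNReal.ofReal C * (ENNReal.ofReal (X ω) + ENNReal.ofReal c) ∂P :=
      lintegral_mono fun ω => by
        rw [ENNReal.ofReal_mul hC]; gcongr; exact ENNReal.ofReal_add_le
  _ = ENNReal.ofReal C * (∫⁻ ω, ENNReal.ofReal (X ω) ∂P + ENNReal.ofReal c) := by
      rw [lintegral_const_mul' _ _ ENNReal.ofReal_ne_top,
        lintegral_add_right' _ aemeasurable_const, lintegral_const, measure_univ, mul_one]
  _ ≤ ENNReal.ofReal C * (ENNReal.ofReal A + ENNReal.ofReal c) := by gcongr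
  _ = ENNReal.ofReal (C * (A + c)) := by
      rw [← ENNReal.ofReal_add hA hc, ← ENNReal.ofReal_mul hC]

theorem delay_functional_Lp_estimate_general
    (p : ℝ) (hp : 1 ≤ p) (L : ℝ) (hL : 0 ≤ L)
    (d : ℕ) (δ : ℝ)
    (μ : Measure ℝ) [IsFiniteMeasure μ]
    (x0 : ℝ → EuclideanSpace ℝ (Fin d))
    (hx0 : ∀ s ∈ Icc (-δ) (1:ℝ), ∀ t ∈ Icc (-δ) (1:ℝ), ‖x0 s - x0 t‖ ≤ L * |s - t|)
    (Ω : Type*) [MeasurableSpace Ω] (P : Measure Ω) [IsProbabilityMeasure P]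
    (Z : Ω → ℝ → EuclideanSpace ℝ (Fin d))
    (hZc : ∀ ω, ContinuousOn (Z ω) (Icc (-δ) 1))
    (A : ℝ) (hA : 0 ≤ A)
    (hdist : (∫⁻ ω, ENNReal.ofReal
        (sSup ((fun s => ‖Z ω s - x0 s‖ ^ p) '' Icc (-δ) (1:ℝ))) ∂P) ≤ ENNReal.ofReal A)
    (n : ℕ) (hn : 1 ≤ n) :
    (∫⁻ ω, ENNReal.ofReal (sSup ((fun t =>
        ‖(∫ u in Icc (0:ℝ) δ,
              Z ω ((⌊(n:ℝ) * t⌋₊ : ℝ) / n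
                - min ((⌊(n:ℝ) * u⌋₊ : ℝ) / n) ((⌊(n:ℝ) * δ⌋₊ : ℝ) / n)) ∂μ)
            - ∫ u in Icc (0:ℝ) δ, x0 (t - u) ∂μ‖ ^ p) '' Icc (0:ℝ) 1)) ∂P)
      ≤ ENNReal.ofReal ((2:ℝ) ^ (p - 1) * (μ (Icc (0:ℝ) δ)).toReal ^ p
          * (A + (2 * L / n) ^ p)) := by
  have hn0 : (0:ℝ) < n := by exact_mod_cast hn
  have hx0L : LipschitzOnWith L.toNNReal x0 (Icc (-δ) 1) :=
    .of_dist_le_mul fun s hs t ht => by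
      simpa [Real.coe_toNNReal L hL, dist_eq_norm, Real.dist_eq] using hx0 s hs t ht
  have hpath := fun ω => sSup_norm_discreteDelay_sub_delay_rpow_le (μ := μ) hp (hZc ω) hx0L hn0
  rw [Real.coe_toNNReal L hL] at hpath
  exact (lintegral_mono fun ω => ENNReal.ofReal_le_ofReal (hpath ω)).trans
    (lintegral_ofReal_mul_add_le (by positivity) (by positivity) hdist hA)

/-- Quantitative `L^p` form of the paper's Lemma 3(ii): if `x⁰` is `L`-Lipschitz on
`[-δ,1]` and `E[sup_{s∈[-δ,1]} ‖Z(s) - x⁰(s)‖^p] ≤ A`, then for every `n ≥ 1`,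
`E[sup_{t∈[0,1]} ‖H_n(Z(⌊nt⌋/n - ·)) - H(x⁰(t-·))‖^p] ≤ 2^{p-1} μ([0,δ])^p (A + (2L/n)^p)`,
where `H_n` uses the grid map `g_n(u) = min(⌊nu⌋/n, ⌊nδ⌋/n)`. -/
theorem delay_functional_Lp_estimate
    (p : ℝ) (hp : 1 ≤ p) (L : ℝ) (hL : 0 ≤ L)
    (d : ℕ) (hd : 1 ≤ d) (δ : ℝ) (hδ : 0 < δ)
    (μ : Measure ℝ) [IsFiniteMeasure μ]
    (x0 : ℝ → EuclideanSpace ℝ (Fin d))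
    (hx0 : ∀ s ∈ Icc (-δ) (1:ℝ), ∀ t ∈ Icc (-δ) (1:ℝ), ‖x0 s - x0 t‖ ≤ L * |s - t|)
    (Ω : Type*) [MeasurableSpace Ω] (P : Measure Ω) [IsProbabilityMeasure P]
    (Z : Ω → ℝ → EuclideanSpace ℝ (Fin d))
    (hZm : Measurable (fun q : Ω × ℝ => Z q.1 q.2))
    (hZc : ∀ ω, ContinuousOn (Z ω) (Icc (-δ) 1))
    (A : ℝ) (hA : 0 ≤ A)
    (hdist : (∫⁻ ω, ENNReal.ofReal
        (sSup ((fun s => ‖Z ω s - x0 s‖ ^ p) '' Icc (-δ) (1:ℝ))) ∂P) ≤ ENNReal.ofReal A)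
    (n : ℕ) (hn : 1 ≤ n) :
    (∫⁻ ω, ENNReal.ofReal (sSup ((fun t =>
        ‖(∫ u in Icc (0:ℝ) δ,
              Z ω ((⌊(n:ℝ) * t⌋₊ : ℝ) / n
                - min ((⌊(n:ℝ) * u⌋₊ : ℝ) / n) ((⌊(n:ℝ) * δ⌋₊ : ℝ) / n)) ∂μ)
            - ∫ u in Icc (0:ℝ) δ, x0 (t - u) ∂μ‖ ^ p) '' Icc (0:ℝ) 1)) ∂P)
      ≤ ENNReal.ofReal ((2:ℝ) ^ (p - 1) * (μ (Icc (0:ℝ) δ)).toReal ^ p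
          * (A + (2 * L / n) ^ p)) :=
  delay_functional_Lp_estimate_general p hp L hL d δ μ x0 hx0 Ω P Z hZc A hA hdist n hn
end
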